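/- arXiv:math/9904172 — 7 statements merged into one kernel-verified Lean document; each statement's English description precedes it below -/
import Mathlib

section
/- Let d, g₀, k₀, u₀, p₀, q₀ be integers with k₀·u₀² = g₀·p₀² − g₀·d·q₀². Then for all integers r and s, setting p = 2·u₀·k₀·r·s − p₀·(g₀·s² + k₀·r²) and q = q₀·(g₀·s² − k₀·r²), there exists an integer u such that g₀·p² − g₀·d·q² = k₀·u². -/
theorem stmt_3 (d g₀ k₀ u₀ p₀ q₀ : ℤ)
    (h : k₀ * u₀^2 = g₀ * p₀^2 - g₀ * d * q₀^2) :
    ∀ r s : ℤ,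
      ∃ u : ℤ,
        g₀ * (2 * u₀ * k₀ * r * s - p₀ * (g₀ * s^2 + k₀ * r^2))^2 -
          g₀ * d * (q₀ * (g₀ * s^2 - k₀ * r^2))^2 = k₀ * u^2 := by
  intro r s
  refine ⟨u₀ * (g₀ * s^2 + k₀ * r^2) - 2 * p₀ * g₀ * r * s, ?_⟩
  linear_combination (-(g₀*s^2 - k₀*r^2)^2) * h
end

section
/- Let v₁, v₂, v₃, k₁, t₁, r₁, s₁ be integers with k₁·t₁² = v₁·r₁² + v₂·r₁·s₁ + v₃·s₁². Then for all integers i and j, setting r = i²·k₁·r₁ − 2·i·j·k₁·t₁ + j²·(r₁·v₁ + s₁·v₂) and s = s₁·(i²·k₁ − j²·v₁), there exists an integer t such that v₁·r² + v₂·r·s + v₃·s² = k₁·t². -/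
theorem stmt_10 (v₁ v₂ v₃ k₁ t₁ r₁ s₁ : ℤ)
    (h : k₁ * t₁^2 = v₁ * r₁^2 + v₂ * r₁ * s₁ + v₃ * s₁^2) :
    ∀ i j : ℤ,
      ∃ t : ℤ,
        v₁ * (i^2 * k₁ * r₁ - 2 * i * j * k₁ * t₁ + j^2 * (r₁ * v₁ + s₁ * v₂))^2 +
          v₂ * (i^2 * k₁ * r₁ - 2 * i * j * k₁ * t₁ + j^2 * (r₁ * v₁ + s₁ * v₂)) *
            (s₁ * (i^2 * k₁ - j^2 * v₁)) +
          v₃ * (s₁ * (i^2 * k₁ - j^2 * v₁))^2 = k₁ * t^2 := by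
  intro i j
  refine ⟨i^2 * k₁ * t₁ - i * j * (2 * v₁ * r₁ + v₂ * s₁) + j^2 * v₁ * t₁, ?_⟩
  linear_combination (-(i^2 * k₁ - j^2 * v₁)^2) * h
end

section
/- Let u₁, u₂, u₃, v₁, v₂, v₃, k₁, t₁, r₁, s₁ be integers with k₁·t₁² = v₁·r₁² + v₂·r₁·s₁ + v₃·s₁². Define, for integers i and j, r = i²·k₁·r₁ − 2·i·j·k₁·t₁ + j²·(r₁·v₁ + s₁·v₂) and s = s₁·(i²·k₁ − j²·v₁), and define c₁ = k₁³·(r₁²·u₁ + r₁·s₁·u₂ + s₁²·u₃), c₂ = −2·k₁³·t₁·(2·r₁·u₁ + s₁·u₂), c₃ = k₁²·(4·k₁·t₁²·u₁ + 2·r₁²·u₁·v₁ + 2·r₁·s₁·u₁·v₂ + s₁²·(u₂·v₂ − 2·u₃·v₁)), c₄ = −2·k₁²·t₁·(2·r₁·u₁·v₁ + s₁·(2·u₁·v₂ − u₂·v₁)), c₅ = k₁·(r₁²·u₁·v₁² + r₁·s₁·v₁·(2·u₁·v₂ − u₂·v₁) + s₁²·(u₁·v₂² − v₁·(u₂·v₂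 − u₃·v₁))). Then for all integers i, j: k₁·(u₁·r² + u₂·r·s + u₃·s²) = c₁·i⁴ + c₂·i³·j + c₃·i²·j² + c₄·i·j³ + c₅·j⁴. -/
theorem stmt_11 (u₁ u₂ u₃ v₁ v₂ v₃ k₁ t₁ r₁ s₁ : ℤ)
    (h : k₁ * t₁^2 = v₁ * r₁^2 + v₂ * r₁ * s₁ + v₃ * s₁^2) :
    ∀ i j : ℤ,
      k₁ * (u₁ * (i^2 * k₁ * r₁ - 2 * i * j * k₁ * t₁ + j^2 * (r₁ * v₁ + s₁ * v₂))^2 +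
          u₂ * (i^2 * k₁ * r₁ - 2 * i * j * k₁ * t₁ + j^2 * (r₁ * v₁ + s₁ * v₂)) *
            (s₁ * (i^2 * k₁ - j^2 * v₁)) +
          u₃ * (s₁ * (i^2 * k₁ - j^2 * v₁))^2) =
        (k₁^3 * (r₁^2 * u₁ + r₁ * s₁ * u₂ + s₁^2 * u₃)) * i^4 +
        (-2 * k₁^3 * t₁ * (2 * r₁ * u₁ + s₁ * u₂)) * i^3 * j +
        (k₁^2 * (4 * k₁ * t₁^2 * u₁ + 2 * r₁^2 * u₁ * v₁ + 2 * r₁ * s₁ * u₁ * v₂ +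
            s₁^2 * (u₂ * v₂ - 2 * u₃ * v₁))) * i^2 * j^2 +
        (-2 * k₁^2 * t₁ * (2 * r₁ * u₁ * v₁ + s₁ * (2 * u₁ * v₂ - u₂ * v₁))) * i * j^3 +
        (k₁ * (r₁^2 * u₁ * v₁^2 + r₁ * s₁ * v₁ * (2 * u₁ * v₂ - u₂ * v₁) +
            s₁^2 * (u₁ * v₂^2 - v₁ * (u₂ * v₂ - u₃ * v₁)))) * j^4 := by intro i j; ring
end

section
/- Let x be the rational number −166136231668185267540804 / 2825630694251145858025. Then there exists a rational number y with y ≠ 0 such that y² = x³ − 157²·x. -/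
theorem stmt_12 :
    ∃ y : ℚ, y ≠ 0 ∧
      y^2 = (-166136231668185267540804 / 2825630694251145858025 : ℚ)^3 -
        157^2 * (-166136231668185267540804 / 2825630694251145858025 : ℚ) := by
  exact ⟨167661624456834335404812111469782006/150201095200135518108761470235125, by norm_num, by norm_num⟩
end

section
/- Let x be the rational number −367·496953629608513608777² / 16382168821648506431464². Then there exists a rational number y with y ≠ 0 such that y² = x³ − 367²·x. -/
theorem stmt_14 :
    ∃ y : ℚ, y ≠ 0 ∧
      y^2 = (-367 * 496953629608513608777^2 / 16382168821648506431464^2 : ℚ)^3 -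
        367^2 * (-367 * 496953629608513608777^2 / 16382168821648506431464^2 : ℚ) := by
  use 937686306079263741377639597416653762838085782579680401447818998743535 / 4396572016327640299291617464552278971801944183958797485516117625344
  norm_num
end

section
/- Let x = 32736879519520344322223209847960433779114725401060, y = 53582671822566098968681023490522468099010526717, and z = −1158255252278102629666593663959067366161157601937, regarded as rational numbers. Then x, y, z are nonzero and (x + y + z)·(1/x + 1/y + 1/z) = 564. -/
theorem stmt_16 :
    (32736879519520344322223209847960433779114725401060 : ℚ) ≠ 0 ∧
    (53582671822566098968681023490522468099010526717 : ℚ) ≠ 0 ∧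
    (-1158255252278102629666593663959067366161157601937 : ℚ) ≠ 0 ∧
    ((32736879519520344322223209847960433779114725401060 : ℚ) +
        53582671822566098968681023490522468099010526717 +
        -1158255252278102629666593663959067366161157601937) *
      (1 / (32736879519520344322223209847960433779114725401060 : ℚ) +
        1 / (53582671822566098968681023490522468099010526717 : ℚ) +
        1 / (-1158255252278102629666593663959067366161157601937 : ℚ)) = 564 := by
  refine ⟨by norm_num, by norm_num, by norm_num, by norm_num⟩
end

section
/- Let x be the rational number 265479261289194419968505186711433025 / 170541875947725676769862564358062336. Then there exists a rational number y with y ≠ 0 such that y² = x³ + 6243·x² + x. -/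
theorem stmt_19 :
    ∃ y : ℚ, y ≠ 0 ∧
      y^2 = (265479261289194419968505186711433025 /
          170541875947725676769862564358062336 : ℚ)^3 +
        6243 * (265479261289194419968505186711433025 /
          170541875947725676769862564358062336 : ℚ)^2 +
        (265479261289194419968505186711433025 /
          170541875947725676769862564358062336 : ℚ) := by
  use 8664016321603321056687336351315022410691388892216893855 /
      70428194317655141454044895267954886097312997056188416
  norm_num
end
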